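/- The principles C_s and D_u are incompatible: it is not the case that both C_s and D_u hold. -/

import Mathlib

noncomputable section

/-- The first uncountable ordinal. -/
def omega1 : Ordinal := (Cardinal.aleph 1).ord

/-- `C ⊆ ω₁` is club: unbounded in `ω₁` and closed (every limit `α < ω₁` with
`sup (C ∩ α) = α` belongs to `C`). -/
def IsClub' (C : Set Ordinal) : Prop :=
  C ⊆ Set.Iio omega1 ∧
  (∀ α < omega1, ∃ β ∈ C, α < β) ∧
  (∀ α < omega1, Order.IsSuccLimit α → sSup (C ∩ Set.Iio α) = α → α ∈ C)

/-- `S ⊆ ω₁` is stationary: it meets every club subset of `ω₁`. -/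
def IsStat (S : Set Ordinal) : Prop :=
  S ⊆ Set.Iio omega1 ∧ ∀ C, IsClub' C → (S ∩ C).Nonempty

/-- A run of the stationary set splitting game `SG`, coded by a pair of
disjoint subsets `A, B` of `ω₁` (the accepted set is `E = A ∪ B`). -/
def SGRun (A B : Set Ordinal) : Prop :=
  A ⊆ Set.Iio omega1 ∧ B ⊆ Set.Iio omega1 ∧ Disjoint A B

/-- Split wins the run `(A, B)` if `A ∪ B` is nonstationary or both `A` and `B`
are stationary. -/
def SplitWins (A B : Set Ordinal) : Prop :=
  ¬ IsStat (A ∪ B) ∨ (IsStat A ∧ IsStat B)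

/-- The run `(A, B)` is played according to Split's strategy `τ`
(`true` = put into `A`): for every accepted `α`, `α ∈ A` iff `τ` says so on the
position `(A ∩ α, B ∩ α)`. -/
def PlayedBySplit (τ : Ordinal → Set Ordinal → Set Ordinal → Bool)
    (A B : Set Ordinal) : Prop :=
  ∀ α ∈ A ∪ B, (α ∈ A ↔ τ α (A ∩ Set.Iio α) (B ∩ Set.Iio α) = true)

/-- `τ` is a winning strategy for Split. -/
def SplitWinning (τ : Ordinal → Set Ordinal → Set Ordinal → Bool) : Prop :=
  ∀ A B, SGRun A B → PlayedBySplit τ A B → SplitWins A B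

/-- The run `(A, B)` is played according to Unsplit's strategy `υ`
(`true` = accept): for every `α < ω₁`, `α` is accepted iff `υ` says so on the
position `(A ∩ α, B ∩ α)`. -/
def PlayedByUnsplit (υ : Ordinal → Set Ordinal → Set Ordinal → Bool)
    (A B : Set Ordinal) : Prop :=
  ∀ α < omega1, (α ∈ A ∪ B ↔ υ α (A ∩ Set.Iio α) (B ∩ Set.Iio α) = true)

/-- `υ` is a winning strategy for Unsplit. -/
def UnsplitWinning (υ : Ordinal → Set Ordinal → Set Ordinal → Bool) : Prop :=
  ∀ A B, SGRun A B → PlayedByUnsplit υ A B → ¬ SplitWins A B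

/-- A set of ordinals has order type `ω`. -/
def OTypeOmega (s : Set Ordinal) : Prop :=
  Ordinal.type ((· < ·) : s → s → Prop) = Ordinal.omega0

/-- The family `⟨a α β : β < γ α⟩` (for `α < ω₁` limit) witnesses `C_s`:
each `a α β` is a cofinal subset of `α` of order type `ω`; the family is
`⊆`-decreasing mod finite in `β`; and for every club `C` and stationary `E`
some `a α β` with `α ∈ E` has `a α β \ C` finite and `a α β ∩ E` infinite. -/
def CsWitness (γ : Ordinal → Ordinal) (a : Ordinal → Ordinal → Set Ordinal) : Prop :=
  (∀ α, α < omega1 → Order.IsSuccLimit α →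
    γ α < omega1 ∧
    ∀ β < γ α, a α β ⊆ Set.Iio α ∧ (∀ ξ < α, ∃ η ∈ a α β, ξ < η) ∧ OTypeOmega (a α β)) ∧
  (∀ α, α < omega1 → Order.IsSuccLimit α → ∀ β β', β < β' → β' < γ α → (a α β' \ a α β).Finite) ∧
  (∀ C E : Set Ordinal, IsClub' C → IsStat E →
    ∃ α β, α < omega1 ∧ Order.IsSuccLimit α ∧ α ∈ E ∧ β < γ α ∧
      (a α β \ C).Finite ∧ (a α β ∩ E).Infinite)

/-- The principle `C_s`. -/
def Cs : Prop :=
  ∃ (γ : Ordinal.{0} → Ordinal.{0}) (a : Ordinal.{0} → Ordinal.{0} → Set Ordinal.{0}), CsWitness γ a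

/-- The sequence `⟨σ α : α < ω₁⟩` witnesses `D_u`: it is a `◊`-sequence, and
for every `E ⊆ ω₁` there is a club `C` such that either every `α ∈ C` guessing
`E` lies in `E`, or every `α ∈ C` guessing `E` lies outside `E`. -/
def DuWitness (σ : Ordinal → Set Ordinal) : Prop :=
  (∀ α < omega1, σ α ⊆ Set.Iio α) ∧
  (∀ A : Set Ordinal, A ⊆ Set.Iio omega1 →
    IsStat {α | α < omega1 ∧ A ∩ Set.Iio α = σ α}) ∧
  (∀ E : Set Ordinal, E ⊆ Set.Iio omega1 →
    ∃ C, IsClub' C ∧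
      ((∀ α ∈ C, E ∩ Set.Iio α = σ α → α ∈ E) ∨
       (∀ α ∈ C, E ∩ Set.Iio α = σ α → α ∉ E)))

/-- The principle `D_u`. -/
def Du : Prop := ∃ σ : Ordinal.{0} → Set Ordinal.{0}, DuWitness σ

/-!
Both principles yield winning strategies in the stationary set splitting game, for opposite
players. Under `C_s`, Split wins by putting an accepted `α` into `A` exactly when some `a^α_β`
meets `B` infinitely often but `A` only finitely often: if a club `C` missed `A` (resp. `B`),
the `a^α_β` that `C_s` attaches to `C` and the stationary set `(A ∪ B) ∩ C` would force `α`
into `A` (resp. out of `A`), against the choice of `C` (resp. the almost-decreasing coherence of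
the `a^α_β`). Under `D_u`, Unsplit wins by accepting `α` exactly when `σ_α` guesses `A ∩ α`: the
accepted set is then stationary by `◊`, while the club given by `D_u` for `A` is missed by `B`
or by `A`. Playing the two strategies against each other yields a run that both players win.
-/

open Set

universe u

lemma iSup_lt_omega1 {c : ℕ → Ordinal} (hc : ∀ n, c n < omega1) : ⨆ n, c n < omega1 := by
  refine Ordinal.lift_iSup_lt_of_lt_cof ?_ hc
  rw [Ordinal.lift_id', omega1, Cardinal.isRegular_aleph_one.cof_ord]
  simp

lemma exists_lt_omega1_frequently_apply_lt {f : Ordinal → Ordinal}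
    (hf : ∀ ξ < omega1, ξ < f ξ ∧ f ξ < omega1) {α : Ordinal} (hα : α < omega1) :
    ∃ s < omega1, α < s ∧ ∀ ξ < s, ∃ η ∈ Ioo ξ s, f η < s := by
  set c : ℕ → Ordinal := fun n => f^[n] α
  have hsucc (n : ℕ) : c (n + 1) = f (c n) := Function.iterate_succ_apply' f n α
  have hc (n : ℕ) : c n < omega1 := by
    induction n with
    | zero => exact hα
    | succ n ih => rw [hsucc]; exact (hf _ ih).2
  have hlt (n : ℕ) : c n < c (n + 1) := hsucc n ▸ (hf _ (hc n)).1
  have hle := Ordinal.le_iSup c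
  refine ⟨⨆ n, c n, iSup_lt_omega1 hc, (hlt 0).trans_le (hle 1), fun ξ hξ => ?_⟩
  obtain ⟨n, hn⟩ := Ordinal.lt_iSup_iff.1 hξ
  exact ⟨c n, ⟨hn, (hlt n).trans_le (hle (n + 1))⟩,
    hsucc n ▸ (hlt (n + 1)).trans_le (hle (n + 2))⟩

lemma exists_mem_between_of_sSup_inter_Iio_eq {S : Set Ordinal} {α : Ordinal}
    (h : sSup (S ∩ Iio α) = α) {ξ : Ordinal} (hξ : ξ < α) :
    ∃ x ∈ S, ξ < x ∧ x < α := by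
  obtain ⟨x, ⟨hxS, hxα⟩, hξx⟩ := exists_lt_of_lt_csSup' (h ▸ hξ)
  exact ⟨x, hxS, hξx, hxα⟩

section Club

variable {C D : Set Ordinal}

lemma IsClub'.mem_of_cofinal (hC : IsClub' C) {α : Ordinal} (hα : α < omega1) (hα0 : α ≠ 0)
    (hcof : ∀ ξ < α, ∃ x ∈ C, ξ < x ∧ x < α) : α ∈ C := by
  have hlim : Order.IsSuccLimit α := by
    refine Ordinal.isSuccLimit_iff.2 ⟨hα0, Order.isSuccPrelimit_of_succ_lt fun ξ hξ => ?_⟩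
    obtain ⟨x, -, hξx, hxα⟩ := hcof ξ hξ
    exact (Order.succ_le_of_lt hξx).trans_lt hxα
  refine hC.2.2 α hα hlim (le_antisymm (csSup_le' fun x hx => hx.2.le) (le_of_forall_lt ?_))
  intro ξ hξ
  obtain ⟨x, hxC, hξx, hxα⟩ := hcof ξ hξ
  exact hξx.trans_le (le_csSup ⟨α, fun y hy => hy.2.le⟩ ⟨hxC, hxα⟩)

lemma IsClub'.exists_next (hC : IsClub' C) :
    ∃ f : Ordinal → Ordinal, ∀ ξ < omega1, f ξ ∈ C ∧ ξ < f ξ := by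
  have h (ξ : Ordinal) : ∃ y, ξ < omega1 → y ∈ C ∧ ξ < y := by
    by_cases hξ : ξ < omega1
    · obtain ⟨y, hyC, hξy⟩ := hC.2.1 ξ hξ
      exact ⟨y, fun _ => ⟨hyC, hξy⟩⟩
    · exact ⟨0, fun h => absurd h hξ⟩
  choose f hf using h
  exact ⟨f, hf⟩

lemma IsClub'.exists_mem_inter_gt (hC : IsClub' C) (hD : IsClub' D) {α : Ordinal}
    (hα : α < omega1) : ∃ s ∈ C ∩ D, α < s := by
  obtain ⟨f, hf⟩ := hC.exists_next
  obtain ⟨g, hg⟩ := hD.exists_next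
  have hfω {ξ} (hξ : ξ < omega1) : f ξ < omega1 := hC.1 (hf ξ hξ).1
  have hgf (ξ) (hξ : ξ < omega1) : f ξ < g (f ξ) ∧ g (f ξ) < omega1 :=
    ⟨(hg _ (hfω hξ)).2, hD.1 (hg _ (hfω hξ)).1⟩
  obtain ⟨s, hsω, hαs, hs⟩ := exists_lt_omega1_frequently_apply_lt
    (fun ξ hξ => ⟨(hf ξ hξ).2.trans (hgf ξ hξ).1, (hgf ξ hξ).2⟩) hα
  refine ⟨s, ⟨hC.mem_of_cofinal hsω hαs.ne_bot fun ξ hξ => ?_,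
    hD.mem_of_cofinal hsω hαs.ne_bot fun ξ hξ => ?_⟩, hαs⟩
  · obtain ⟨η, ⟨hξη, hηs⟩, hgfη⟩ := hs ξ hξ
    have hη := hηs.trans hsω
    exact ⟨f η, (hf η hη).1, hξη.trans (hf η hη).2, (hgf η hη).1.trans hgfη⟩
  · obtain ⟨η, ⟨hξη, hηs⟩, hgfη⟩ := hs ξ hξ
    have hη := hηs.trans hsω
    exact ⟨g (f η), (hg _ (hfω hη)).1,
      hξη.trans ((hf η hη).2.trans (hgf η hη).1), hgfη⟩

lemma IsClub'.inter (hC : IsClub' C) (hD : IsClub' D) : IsClub' (C ∩ D) := by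
  refine ⟨fun x hx => hC.1 hx.1, fun α hα => hC.exists_mem_inter_gt hD hα,
    fun α hα hlim hsup => ?_⟩
  have hcof (S : Set Ordinal) (hS : C ∩ D ⊆ S) :
      ∀ ξ < α, ∃ x ∈ S, ξ < x ∧ x < α := by
    intro ξ hξ
    obtain ⟨x, hx, hξx, hxα⟩ := exists_mem_between_of_sSup_inter_Iio_eq hsup hξ
    exact ⟨x, hS hx, hξx, hxα⟩
  exact ⟨hC.mem_of_cofinal hα hlim.ne_bot (hcof C inter_subset_left),
    hD.mem_of_cofinal hα hlim.ne_bot (hcof D inter_subset_right)⟩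

end Club

lemma IsStat.inter_club {E C : Set Ordinal} (hE : IsStat E) (hC : IsClub' C) :
    IsStat (E ∩ C) := by
  refine ⟨fun x hx => hE.1 hx.1, fun D hD => ?_⟩
  obtain ⟨x, hxE, hxC, hxD⟩ := hE.2 _ (hC.inter hD)
  exact ⟨x, ⟨hxE, hxC⟩, hxD⟩

lemma exists_isClub'_disjoint_of_not_isStat {S : Set Ordinal} (hS : S ⊆ Iio omega1)
    (h : ¬ IsStat S) : ∃ C, IsClub' C ∧ Disjoint S C := by
  by_contra! hmeet
  exact h ⟨hS, fun C hC => not_disjoint_iff_nonempty_inter.1 (hmeet C hC)⟩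

theorem exists_pair_rec {ι : Type*} [Preorder ι] [WellFoundedLT ι]
    (step : ι → Set ι → Set ι → Bool × Bool) :
    ∃ A B : Set ι, ∀ i, (i ∈ A ↔ (step i (A ∩ Iio i) (B ∩ Iio i)).1) ∧
      (i ∈ B ↔ (step i (A ∩ Iio i) (B ∩ Iio i)).2) := by
  let r : ι → Bool × Bool := wellFounded_lt.fix fun i ih =>
    step i {j | ∃ h : j < i, (ih j h).1} {j | ∃ h : j < i, (ih j h).2}
  have hr (i : ι) : r i = step i ({j | (r j).1} ∩ Iio i) ({j | (r j).2} ∩ Iio i) := by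
    rw [show r i = _ from wellFounded_lt.fix_eq _ i]
    congr 1 <;> ext j <;> simp [r, and_comm]
  exact ⟨{j | (r j).1}, {j | (r j).2}, fun i => by simp [← hr]⟩

theorem exists_run_playedBySplit_playedByUnsplit
    (τ υ : Ordinal.{u} → Set Ordinal.{u} → Set Ordinal.{u} → Bool) :
    ∃ A B, SGRun A B ∧ PlayedBySplit τ A B ∧ PlayedByUnsplit υ A B := by
  obtain ⟨A, B, h⟩ := exists_pair_rec fun α X Y =>
    (decide (α < omega1) && υ α X Y && τ α X Y, decide (α < omega1) && υ α X Y && !τ α X Y)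
  have hmem (α : Ordinal) :
      (α ∈ A ↔ (α < omega1 ∧ υ α (A ∩ Iio α) (B ∩ Iio α) = true) ∧
        τ α (A ∩ Iio α) (B ∩ Iio α) = true) ∧
      (α ∈ B ↔ (α < omega1 ∧ υ α (A ∩ Iio α) (B ∩ Iio α) = true) ∧
        τ α (A ∩ Iio α) (B ∩ Iio α) = false) := by
    simpa [and_assoc] using h α
  refine ⟨A, B, ⟨fun α hα => ((hmem α).1.1 hα).1.1, fun α hα => ((hmem α).2.1 hα).1.1,
    disjoint_left.2 fun α hA hB => ?_⟩, fun α hα => ?_, fun α hα => ?_⟩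
  · rw [(hmem α).1] at hA
    rw [(hmem α).2, hA.2] at hB
    exact Bool.true_eq_false_eq_False hB.2
  · rw [mem_union, (hmem α).1, (hmem α).2] at hα
    rw [(hmem α).1]
    tauto
  · rw [mem_union, (hmem α).1, (hmem α).2]
    cases τ α (A ∩ Iio α) (B ∩ Iio α) <;> simp [hα]

theorem not_splitWinning_and_unsplitWinning
    (τ υ : Ordinal.{u} → Set Ordinal.{u} → Set Ordinal.{u} → Bool) :
    ¬ (SplitWinning τ ∧ UnsplitWinning υ) := by
  rintro ⟨hτ, hυ⟩
  obtain ⟨A, B, hrun, hsplit, hunsplit⟩ := exists_run_playedBySplit_playedByUnsplit τ υ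
  exact hυ A B hrun hunsplit (hτ A B hrun hsplit)

lemma Set.Finite.inter_of_diff {α : Type*} {s t X : Set α} (hd : (t \ s).Finite)
    (hs : (s ∩ X).Finite) : (t ∩ X).Finite :=
  (hd.subset fun _ hx => ⟨hx.1.1, fun hs => hx.2 ⟨hs, hx.1.2⟩⟩).of_sdiff hs

open Classical in
def csSplitStrategy (γ : Ordinal.{u} → Ordinal.{u})
    (a : Ordinal.{u} → Ordinal.{u} → Set Ordinal.{u}) :
    Ordinal.{u} → Set Ordinal.{u} → Set Ordinal.{u} → Bool :=
  fun α X Y => decide (∃ β < γ α, (a α β ∩ Y).Infinite ∧ (a α β ∩ X).Finite)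

section CsWitness

variable {γ : Ordinal.{u} → Ordinal.{u}} {a : Ordinal.{u} → Ordinal.{u} → Set Ordinal.{u}}
  {α : Ordinal.{u}}

lemma CsWitness.csSplitStrategy_apply (h : CsWitness γ a) (hα : α < omega1)
    (hlim : Order.IsSuccLimit α) (A B : Set Ordinal) :
    csSplitStrategy γ a α (A ∩ Iio α) (B ∩ Iio α) = true ↔
      ∃ β < γ α, (a α β ∩ B).Infinite ∧ (a α β ∩ A).Finite := by
  have hrestrict (β) (hβ : β < γ α) (X : Set Ordinal) :
      a α β ∩ (X ∩ Iio α) = a α β ∩ X := by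
    rw [inter_comm X, ← inter_assoc, inter_eq_left.2 ((h.1 α hα hlim).2 β hβ).1]
  simp only [csSplitStrategy, decide_eq_true_eq]
  exact exists_congr fun β => and_congr_right fun hβ => by rw [hrestrict β hβ, hrestrict β hβ]

lemma CsWitness.finite_diff_or_finite_diff (h : CsWitness γ a) (hα : α < omega1)
    (hlim : Order.IsSuccLimit α) {β β' : Ordinal} (hβ : β < γ α) (hβ' : β' < γ α) :
    (a α β' \ a α β).Finite ∨ (a α β \ a α β').Finite := by
  rcases lt_trichotomy β β' with hlt | rfl | hlt
  · exact Or.inl (h.2.1 α hα hlim β β' hlt hβ')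
  · simp
  · exact Or.inr (h.2.1 α hα hlim β' β hlt hβ)

lemma CsWitness.finite_inter_of_finite_inter (h : CsWitness γ a) (hα : α < omega1)
    (hlim : Order.IsSuccLimit α) {β β' : Ordinal} (hβ : β < γ α) (hβ' : β' < γ α)
    {X Y : Set Ordinal} (hX : (a α β ∩ X).Infinite) (hY : (a α β ∩ Y).Finite)
    (hX' : (a α β' ∩ X).Finite) : (a α β' ∩ Y).Finite := by
  rcases h.finite_diff_or_finite_diff hα hlim hβ hβ' with hd | hd
  · exact hd.inter_of_diff hY
  · exact absurd (hd.inter_of_diff hX') hX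

theorem CsWitness.splitWinning (h : CsWitness γ a) : SplitWinning (csSplitStrategy γ a) := by
  rintro A B ⟨hA, hB, -⟩ hplay
  by_contra hlose
  rw [SplitWins, not_or, not_not, not_and_or] at hlose
  obtain ⟨hE, hns⟩ := hlose
  obtain ⟨C, hC, hmiss⟩ : ∃ C, IsClub' C ∧ (Disjoint A C ∨ Disjoint B C) := by
    rcases hns with hns | hns
    · obtain ⟨C, hC, hd⟩ := exists_isClub'_disjoint_of_not_isStat hA hns
      exact ⟨C, hC, Or.inl hd⟩
    · obtain ⟨C, hC, hd⟩ := exists_isClub'_disjoint_of_not_isStat hB hns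
      exact ⟨C, hC, Or.inr hd⟩
  obtain ⟨α, β, hα, hlim, ⟨hαE, hαC⟩, hβ, hfin, hinf⟩ :=
    h.2.2 C _ hC (hE.inter_club hC)
  have hplayα := hplay α hαE
  rw [h.csSplitStrategy_apply hα hlim] at hplayα
  have hfin_of {X : Set Ordinal} (hX : Disjoint X C) : (a α β ∩ X).Finite :=
    hfin.subset fun x hx => ⟨hx.1, disjoint_left.1 hX hx.2⟩
  rcases hmiss with hAC | hBC
  · have hinfB : (a α β ∩ B).Infinite := hinf.mono fun x hx =>
      ⟨hx.1, hx.2.1.resolve_left fun hxA => disjoint_left.1 hAC hxA hx.2.2⟩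
    exact disjoint_left.1 hAC (hplayα.2 ⟨β, hβ, hinfB, hfin_of hAC⟩) hαC
  · have hinfA : (a α β ∩ A).Infinite := hinf.mono fun x hx =>
      ⟨hx.1, hx.2.1.resolve_right fun hxB => disjoint_left.1 hBC hxB hx.2.2⟩
    have hαA : α ∈ A := hαE.resolve_right fun hαB => disjoint_left.1 hBC hαB hαC
    obtain ⟨β', hβ', hinfB', hfinA'⟩ := hplayα.1 hαA
    exact hinfB' (h.finite_inter_of_finite_inter hα hlim hβ hβ' hinfA (hfin_of hBC) hfinA')

end CsWitness

open Classical in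
def guessingUnsplitStrategy (σ : Ordinal.{u} → Set Ordinal.{u}) :
    Ordinal.{u} → Set Ordinal.{u} → Set Ordinal.{u} → Bool :=
  fun α X _ => decide (X = σ α)

theorem DuWitness.unsplitWinning {σ : Ordinal.{u} → Set Ordinal.{u}} (h : DuWitness σ) :
    UnsplitWinning (guessingUnsplitStrategy σ) := by
  rintro A B ⟨hA, hB, hAB⟩ hplay
  have hguess {α} (hα : α ∈ A ∪ B) : A ∩ Iio α = σ α := by
    simpa [guessingUnsplitStrategy] using (hplay α (union_subset hA hB hα)).1 hα
  have hE : A ∪ B = {α | α < omega1 ∧ A ∩ Iio α = σ α} := by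
    ext α
    refine ⟨fun hα => ⟨union_subset hA hB hα, hguess hα⟩, fun ⟨hα, hg⟩ => ?_⟩
    exact (hplay α hα).2 (by simpa [guessingUnsplitStrategy] using hg)
  rintro (hns | ⟨hAs, hBs⟩)
  · exact hns (hE ▸ h.2.1 A hA)
  obtain ⟨C, hC, hin | hout⟩ := h.2.2 A hA
  · obtain ⟨x, hxB, hxC⟩ := hBs.2 C hC
    exact disjoint_left.1 hAB (hin x hxC (hguess (Or.inr hxB))) hxB
  · obtain ⟨x, hxA, hxC⟩ := hAs.2 C hC
    exact hout x hxC (hguess (Or.inl hxA)) hxA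

/-- The principles `C_s` and `D_u` are incompatible. -/
theorem cs_du_incompatible : ¬ (Cs ∧ Du) := by
  rintro ⟨⟨γ, a, hcs⟩, ⟨σ, hdu⟩⟩
  exact not_splitWinning_and_unsplitWinning _ _ ⟨hcs.splitWinning, hdu.unsplitWinning⟩
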